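/- Let p be a prime number and let A be any associative (possibly noncommutative) ring. If c ∈ A lies in [A,A], the additive subgroup of A generated by all commutators xy − yx with x, y ∈ A, then c^p lies in the additive subgroup pA + [A,A]. -/

import Mathlib

/-- The additive subgroup `[A,A]` of a ring `A` generated by all commutators `x*y - y*x`. -/
def commutatorAddSubgroup (A : Type*) [Ring A] : AddSubgroup A :=
  AddSubgroup.closure {z : A | ∃ x y : A, z = x * y - y * x}

/-- The additive subgroup `p·A + [A,A]` of a ring `A`. -/
def pCommutatorAddSubgroup (p : ℕ) (A : Type*) [Ring A] : AddSubgroup A :=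
  AddSubgroup.closure ({x : A | ∃ c : A, x = p • c} ∪ {z : A | ∃ x y : A, z = x * y - y * x})

/-!
Expand `(∑ i, x i) ^ p` as the sum of the products of all words of length `p` in the letters
`x i`. Rotating a word changes its product by a commutator, and rotation has order `p` on words,
so every non-constant word lies in a rotation orbit of exactly `p` words, whose products add up to
an element of `pA + [A,A]`; only the constant words, with products `x i ^ p`, survive. Hence
`a ↦ a ^ p` is additive modulo `pA + [A,A]`, and it kills commutators because `(x * y) ^ p` and
`(y * x) ^ p` differ by a commutator.
-/

open Finset

namespace Equiv.Perm

variable {α : Type*} [Fintype α] [DecidableEq α]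

theorem card_support_cycleOf_of_pow_prime_eq_one {p : ℕ} (hp : p.Prime) {σ : Perm α}
    (hσ : σ ^ p = 1) {x : α} (hx : σ x ≠ x) : #(σ.cycleOf x).support = p := by
  have hcycle := σ.isCycle_cycleOf hx
  rw [← hcycle.orderOf]
  refine (hp.eq_one_or_self_of_dvd _ ((σ.orderOf_cycleOf_dvd_orderOf x).trans
    (orderOf_dvd_of_pow_eq_one hσ))).resolve_left fun h => hcycle.ne_one ?_
  exact orderOf_eq_one_iff.mp h

theorem sum_eq_sum_filter_apply_eq_self {M : Type*} [AddCommGroup M] {p : ℕ} (hp : p.Prime)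
    {σ : Perm α} (hσ : σ ^ p = 1) {f : α → M} (hf : f ∘ σ = f) (hfp : ∀ x, p • f x = 0) :
    ∑ x, f x = ∑ x with σ x = x, f x := by
  rw [← sum_filter_add_sum_filter_not univ (fun x => σ x = x), add_eq_left]
  classical
  refine sum_cancels_of_partition_cancels (SameCycle.setoid σ) fun x hx => ?_
  have hx : σ x ≠ x := (mem_filter.mp hx).2
  have hcycle : {a ∈ ({a | ¬σ a = a} : Finset α) | SameCycle.setoid σ a x} =
      (σ.cycleOf x).support := by
    ext a
    rw [mem_support_cycleOf_iff' hx, sameCycle_comm]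
    simp only [mem_filter, mem_univ, true_and]
    exact ⟨And.right, fun h => ⟨mt h.apply_eq_self_iff.mp hx, h⟩⟩
  have hconst : ∀ a ∈ (σ.cycleOf x).support, f a = f x := by
    intro a ha
    obtain ⟨k, -, rfl⟩ := ((mem_support_cycleOf_iff' hx).mp ha).exists_pow_eq'
    rw [coe_pow]
    exact congrFun (Function.iterate_invariant hf k) x
  rw [hcycle, sum_congr rfl hconst, sum_const, card_support_cycleOf_of_pow_prime_eq_one hp hσ hx,
    hfp]

end Equiv.Perm

section Words

open Fin.NatCast

variable {ι : Type*}

theorem sum_pow_eq_sum_prod_ofFn {A : Type*} [Semiring A] [Fintype ι] (x : ι → A) (n : ℕ) :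
    (∑ i, x i) ^ n = ∑ w : Fin n → ι, (List.ofFn fun k => x (w k)).prod := by
  induction n with
  | zero => simp
  | succ n ih =>
    rw [pow_succ', ih, sum_mul_sum, ← Fintype.sum_prod_type',
      ← (Fin.consEquiv fun _ => ι).sum_comp]
    simp [Fin.consEquiv, List.ofFn_succ]

def wordRotate (n : ℕ) [NeZero n] : Equiv.Perm (Fin n → ι) where
  toFun w i := w (i + 1)
  invFun w i := w (i - 1)
  left_inv w := by ext i; simp
  right_inv w := by ext i; simp

variable {n : ℕ} [NeZero n]

theorem wordRotate_pow_apply (k : ℕ) (w : Fin n → ι) (i : Fin n) :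
    (wordRotate n ^ k) w i = w (i + k) := by
  induction k generalizing w with
  | zero => simp
  | succ k ih =>
    rw [pow_succ, Equiv.Perm.mul_apply, ih]
    simp only [wordRotate, Equiv.coe_fn_mk, Nat.cast_succ, add_assoc]

theorem wordRotate_pow_self : (wordRotate n : Equiv.Perm (Fin n → ι)) ^ n = 1 := by
  ext w i
  simp [wordRotate_pow_apply]

theorem wordRotate_eq_self_iff {w : Fin n → ι} : wordRotate n w = w ↔ w = fun _ => w 0 := by
  refine ⟨fun h => funext fun i => ?_, fun h => by rw [h]; rfl⟩
  calc w i = (wordRotate n ^ i.val) w 0 := by simp [wordRotate_pow_apply]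
    _ = w 0 := by rw [Equiv.Perm.pow_apply_eq_self_of_apply_eq_self h]

theorem sum_filter_wordRotate_eq_self [Fintype ι] [DecidableEq ι] {M : Type*} [AddCommMonoid M]
    (g : (Fin n → ι) → M) : ∑ w with wordRotate n w = w, g w = ∑ i, g fun _ => i := by
  refine sum_nbij' (· 0) (fun i _ => i) (by simp) (by simp [wordRotate_eq_self_iff])
    (fun w hw => ?_) (by simp) (fun w hw => ?_)
  · exact (wordRotate_eq_self_iff.mp (mem_filter.mp hw).2).symm
  · exact congrArg g (wordRotate_eq_self_iff.mp (mem_filter.mp hw).2)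

end Words

section Ring

variable {A : Type*} [Ring A]

theorem mem_commutatorAddSubgroup (x y : A) : x * y - y * x ∈ commutatorAddSubgroup A :=
  AddSubgroup.subset_closure ⟨x, y, rfl⟩

theorem commutatorAddSubgroup_le_pCommutatorAddSubgroup (p : ℕ) :
    commutatorAddSubgroup A ≤ pCommutatorAddSubgroup p A :=
  AddSubgroup.closure_mono Set.subset_union_right

theorem nsmul_mem_pCommutatorAddSubgroup (p : ℕ) (a : A) : p • a ∈ pCommutatorAddSubgroup p A :=
  AddSubgroup.subset_closure (Or.inl ⟨a, rfl⟩)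

theorem mul_pow_sub_mul_pow_mem_commutatorAddSubgroup (x y : A) (n : ℕ) :
    (x * y) ^ n - (y * x) ^ n ∈ commutatorAddSubgroup A := by
  cases n with
  | zero => simp
  | succ m =>
    have hxy : (x * y) ^ (m + 1) = x * ((y * x) ^ m * y) := by
      rw [pow_succ, ← mul_assoc, mul_pow_mul, mul_assoc]
    have hyx : (y * x) ^ (m + 1) = (y * x) ^ m * y * x := by
      rw [pow_succ, mul_assoc]
    rw [hxy, hyx]
    exact mem_commutatorAddSubgroup _ _

theorem prod_ofFn_rotate_sub_mem_commutatorAddSubgroup {n : ℕ} [NeZero n] (f : Fin n → A) :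
    (List.ofFn fun i => f (i + 1)).prod - (List.ofFn f).prod ∈ commutatorAddSubgroup A := by
  obtain ⟨m, rfl⟩ := Nat.exists_eq_succ_of_ne_zero (NeZero.ne n)
  rw [List.ofFn_succ', List.ofFn_succ, List.prod_concat, List.prod_cons]
  simp only [Fin.coeSucc_eq_succ, Fin.last_add_one]
  exact mem_commutatorAddSubgroup _ _

theorem sum_pow_sub_sum_pow_mem_pCommutatorAddSubgroup {ι : Type*} [Fintype ι] {p : ℕ}
    (hp : p.Prime) (x : ι → A) :
    (∑ i, x i) ^ p - ∑ i, x i ^ p ∈ pCommutatorAddSubgroup p A := by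
  classical
  have : NeZero p := ⟨hp.ne_zero⟩
  set H := pCommutatorAddSubgroup p A
  let F : (Fin p → ι) → A ⧸ H := fun w => ((List.ofFn fun k => x (w k)).prod : A ⧸ H)
  have hF : F ∘ wordRotate p = F := funext fun w => QuotientAddGroup.eq_iff_sub_mem.mpr
    (commutatorAddSubgroup_le_pCommutatorAddSubgroup p
      (prod_ofFn_rotate_sub_mem_commutatorAddSubgroup fun k => x (w k)))
  have hFp : ∀ w, p • F w = 0 := fun w => by
    rw [← QuotientAddGroup.mk_nsmul, QuotientAddGroup.eq_zero_iff]
    exact nsmul_mem_pCommutatorAddSubgroup p _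
  rw [← QuotientAddGroup.eq_iff_sub_mem]
  calc (((∑ i, x i) ^ p : A) : A ⧸ H) = ∑ w, F w := by
        rw [sum_pow_eq_sum_prod_ofFn, QuotientAddGroup.mk_sum]
    _ = ∑ w with wordRotate p w = w, F w :=
        Equiv.Perm.sum_eq_sum_filter_apply_eq_self hp wordRotate_pow_self hF hFp
    _ = ∑ i, F fun _ => i := sum_filter_wordRotate_eq_self F
    _ = ((∑ i, x i ^ p : A) : A ⧸ H) := by
        simp [F, List.ofFn_const, QuotientAddGroup.mk_sum]

def frobeniusModCommutator {p : ℕ} (hp : p.Prime) : A →+ A ⧸ pCommutatorAddSubgroup p A where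
  toFun a := (a ^ p : A)
  map_zero' := by rw [zero_pow hp.ne_zero, QuotientAddGroup.mk_zero]
  map_add' a b := by
    have h := sum_pow_sub_sum_pow_mem_pCommutatorAddSubgroup hp ![a, b]
    simp only [Fin.sum_univ_two, Matrix.cons_val_zero, Matrix.cons_val_one] at h
    rw [← QuotientAddGroup.mk_add, QuotientAddGroup.eq_iff_sub_mem]
    exact h

theorem commutatorAddSubgroup_le_ker_frobeniusModCommutator {p : ℕ} (hp : p.Prime) :
    commutatorAddSubgroup A ≤ (frobeniusModCommutator (A := A) hp).ker := by
  refine AddSubgroup.closure_le _ |>.mpr ?_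
  rintro _ ⟨x, y, rfl⟩
  rw [SetLike.mem_coe, AddMonoidHom.mem_ker, map_sub, sub_eq_zero]
  exact QuotientAddGroup.eq_iff_sub_mem.mpr (commutatorAddSubgroup_le_pCommutatorAddSubgroup p
    (mul_pow_sub_mul_pow_mem_commutatorAddSubgroup x y p))

end Ring

theorem stmt_7 (p : ℕ) (hp : p.Prime) (A : Type*) [Ring A] (c : A)
    (hc : c ∈ commutatorAddSubgroup A) :
    c ^ p ∈ pCommutatorAddSubgroup p A :=
  (QuotientAddGroup.eq_zero_iff _).mp (commutatorAddSubgroup_le_ker_frobeniusModCommutator hp hc)
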